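/- Any pregroupoid homomorphism φ from a pregroupoid X on A, B to the underlying pregroupoid of a groupoid G extends uniquely to a functor φ̄ : X⁺ → G from the enveloping groupoid, with φ̄ ∘ η = φ, where φ̄(x⁻¹) = φ(x)⁻¹, φ̄(xz⁻¹) = φ(x) ∘ φ(z)⁻¹, φ̄(x⁻¹z) = φ(x)⁻¹ ∘ φ(z). -/

import Mathlib

/-!
`X⁺` is generated by `X` subject to its multiplication table, so a functor out of it is
determined by its values on `X`: necessarily `x⁻¹ ↦ φ(x)⁻¹`, `yx⁻¹ ↦ φ(y) φ(x)⁻¹` and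
`x⁻¹z ↦ φ(x)⁻¹ φ(z)`. Because `φ` preserves `y x⁻¹ z`, these values do not depend on the chosen
representative of a fraction, and every entry of the table is sent to the corresponding
composite in the groupoid, so they do define a functor.
-/

namespace Kock

/-- A pregroupoid on `A`, `B`: an inhabited type `X` with surjections `α`, `β` and a
partial ternary operation `op y x z` (meaning `y x⁻¹ z`), defined whenever
`β x = β y` and `α x = α z`; partiality is encoded by proof arguments, and the
axioms are quantified over all proofs of the book-keeping conditions. -/
structure Pregroupoid (A B X : Type*) : Type _ where
  α : X → A
  β : X → B
  nonempty : Nonempty X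
  α_surj : Function.Surjective α
  β_surj : Function.Surjective β
  op : (y x z : X) → β x = β y → α x = α z → X
  α_op : ∀ (y x z : X) (h1 : β x = β y) (h2 : α x = α z), α (op y x z h1 h2) = α y
  β_op : ∀ (y x z : X) (h1 : β x = β y) (h2 : α x = α z), β (op y x z h1 h2) = β z
  U1 : ∀ (x z : X) (h1 : β x = β x) (h2 : α x = α z), op x x z h1 h2 = z
  U2 : ∀ (y x : X) (h1 : β x = β y) (h2 : α x = α x), op y x x h1 h2 = y
  G1 : ∀ (v y x z : X) (h1 : β x = β y) (h2 : α x = α z) (h3 : β y = β v)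
      (h4 : α y = α (op y x z h1 h2)) (h5 : β x = β v),
      op v y (op y x z h1 h2) h3 h4 = op v x z h5 h2
  G2 : ∀ (y x z w : X) (h1 : β x = β y) (h2 : α x = α z)
      (h3 : β z = β (op y x z h1 h2)) (h4 : α z = α w) (h5 : α x = α w),
      op (op y x z h1 h2) z w h3 h4 = op y x w h1 h5


/-- Horizontal pairs: pairs `(x, y)` with `β x = β y`; the class of `(x,y)`
is the fraction `yx⁻¹`. -/
def HPair {A B X : Type*} (P : Pregroupoid A B X) : Type _ :=
  {p : X × X // P.β p.1 = P.β p.2}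

/-- `(x, y) ≅ₕ (z, u)` iff `α x = α z` and `u = yx⁻¹z`. -/
def hRel {A B X : Type*} (P : Pregroupoid A B X) (p q : HPair P) : Prop :=
  ∃ h : P.α p.val.1 = P.α q.val.1,
    q.val.2 = P.op p.val.2 p.val.1 q.val.1 p.prop h

/-- Vertical pairs: pairs `(x, z)` with `α x = α z`; the class of `(x,z)`
is the fraction `x⁻¹z`. -/
def VPair {A B X : Type*} (P : Pregroupoid A B X) : Type _ :=
  {p : X × X // P.α p.1 = P.α p.2}

/-- `(x, z) ≅ᵥ (y, u)` iff `β x = β y` and `u = yx⁻¹z`. -/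
def vRel {A B X : Type*} (P : Pregroupoid A B X) (p q : VPair P) : Prop :=
  ∃ h : P.β p.val.1 = P.β q.val.1,
    q.val.2 = P.op q.val.1 p.val.1 p.val.2 h p.prop

/-- `XX⁻¹`: fractions `yx⁻¹`, the classes of horizontal pairs. -/
def XXinv {A B X : Type*} (P : Pregroupoid A B X) : Type _ := Quot (hRel P)

/-- `X⁻¹X`: fractions `x⁻¹z`, the classes of vertical pairs. -/
def XinvX {A B X : Type*} (P : Pregroupoid A B X) : Type _ := Quot (vRel P)

/-- The arrows of the enveloping groupoid `X⁺`: the four disjoint pieces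
`X⁺(A,A) = XX⁻¹`, `X⁺(B,B) = X⁻¹X`, `X⁺(A,B) = X` and `X⁺(B,A) = X⁻¹`
(a formal copy of `X`). -/
inductive Arr {A B X : Type*} (P : Pregroupoid A B X) : Type _
  | aa : XXinv P → Arr P
  | bb : XinvX P → Arr P
  | ab : X → Arr P
  | ba : X → Arr P

/-- The fraction `yx⁻¹`, as an arrow of `X⁺`. -/
def mkAA {A B X : Type*} (P : Pregroupoid A B X) (y x : X)
    (h : P.β x = P.β y) : Arr P :=
  .aa (Quot.mk _ ⟨(x, y), h⟩)

/-- The fraction `x⁻¹z`, as an arrow of `X⁺`. -/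
def mkBB {A B X : Type*} (P : Pregroupoid A B X) (x z : X)
    (h : P.α x = P.α z) : Arr P :=
  .bb (Quot.mk _ ⟨(x, z), h⟩)

/-- `x ∈ X = X⁺(A,B)`, as an arrow of `X⁺`. -/
def mkAB {A B X : Type*} (P : Pregroupoid A B X) (x : X) : Arr P := .ab x

/-- `x⁻¹ ∈ X⁻¹ = X⁺(B,A)`, as an arrow of `X⁺`. -/
def mkBA {A B X : Type*} (P : Pregroupoid A B X) (x : X) : Arr P := .ba x

/-- The domain book-keeping map of `X⁺`, with values in `A ⊔ B`. -/
def d0 {A B X : Type*} (P : Pregroupoid A B X) : Arr P → A ⊕ B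
  | .aa c => Sum.inl (Quot.lift (fun p => P.α p.val.2)
      (fun p q => by rintro ⟨h, hq⟩; show P.α p.val.2 = P.α q.val.2; rw [hq, P.α_op]) c)
  | .bb c => Sum.inr (Quot.lift (fun p => P.β p.val.1)
      (fun p q => by rintro ⟨h, hq⟩; exact h) c)
  | .ab x => Sum.inl (P.α x)
  | .ba x => Sum.inr (P.β x)

/-- The codomain book-keeping map of `X⁺`, with values in `A ⊔ B`. -/
def d1 {A B X : Type*} (P : Pregroupoid A B X) : Arr P → A ⊕ B
  | .aa c => Sum.inl (Quot.lift (fun p => P.α p.val.1)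
      (fun p q => by rintro ⟨h, hq⟩; exact h) c)
  | .bb c => Sum.inr (Quot.lift (fun p => P.β p.val.2)
      (fun p q => by rintro ⟨h, hq⟩; show P.β p.val.2 = P.β q.val.2; rw [hq, P.β_op]) c)
  | .ab x => Sum.inr (P.β x)
  | .ba x => Sum.inl (P.α x)

/-- The hom-sets of the enveloping groupoid `X⁺`, over the object set `A ⊔ B`. -/
def EnvHom {A B X : Type*} (P : Pregroupoid A B X) (a b : A ⊕ B) : Type _ :=
  {f : Arr P // d0 P f = a ∧ d1 P f = b}

/-- A groupoid structure on a family of hom-sets: identities, composition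
(written from left to right), inverses, and the groupoid laws. -/
structure GroupoidStructure {Obj : Type*} (Hom : Obj → Obj → Type*) where
  ident : ∀ a, Hom a a
  comp : ∀ {a b c}, Hom a b → Hom b c → Hom a c
  inv : ∀ {a b}, Hom a b → Hom b a
  id_comp : ∀ {a b} (f : Hom a b), comp (ident a) f = f
  comp_id : ∀ {a b} (f : Hom a b), comp f (ident b) = f
  assoc : ∀ {a b c d} (f : Hom a b) (g : Hom b c) (h : Hom c d),
    comp (comp f g) h = comp f (comp g h)
  inv_comp : ∀ {a b} (f : Hom a b), comp (inv f) f = ident b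
  comp_inv : ∀ {a b} (f : Hom a b), comp f (inv f) = ident a

/-- The multiplication table of the enveloping groupoid `X⁺`, together with the
description of its identities: composition (left to right) of the four kinds of
arrows is given by `x₁x₂⁻¹ ∘ x₃x₄⁻¹ = (x₁x₂⁻¹x₃)x₄⁻¹`, `x₁x₂⁻¹ ∘ x₃ = x₁x₂⁻¹x₃`,
`x₁ ∘ x₂⁻¹ = x₁x₂⁻¹`, `x₁ ∘ x₂⁻¹x₃ = x₁x₂⁻¹x₃`, `x₃⁻¹ ∘ x₂x₁⁻¹ = (x₁x₂⁻¹x₃)⁻¹`,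
`x₂⁻¹ ∘ x₃ = x₂⁻¹x₃`, `x₃⁻¹x₂ ∘ x₁⁻¹ = (x₁x₂⁻¹x₃)⁻¹`,
`x₂⁻¹x₃ ∘ x₄⁻¹x₅ = x₂⁻¹(x₃x₄⁻¹x₅)`, and the identity at `α x` is `xx⁻¹`,
the identity at `β x` is `x⁻¹x`. -/
def TableSpec {A B X : Type*} (P : Pregroupoid A B X)
    (str : GroupoidStructure (EnvHom P)) : Prop :=
  (∀ (a b c : A ⊕ B) (f : EnvHom P a b) (g : EnvHom P b c)
    (x1 x2 x3 x4 : X) (h12 : P.β x2 = P.β x1) (h34 : P.β x4 = P.β x3)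
    (h23 : P.α x2 = P.α x3) (hu : P.β x4 = P.β (P.op x1 x2 x3 h12 h23)),
    f.val = mkAA P x1 x2 h12 → g.val = mkAA P x3 x4 h34 →
    (str.comp f g).val = mkAA P (P.op x1 x2 x3 h12 h23) x4 hu) ∧
  (∀ (a b c : A ⊕ B) (f : EnvHom P a b) (g : EnvHom P b c)
    (x1 x2 x3 : X) (h12 : P.β x2 = P.β x1) (h23 : P.α x2 = P.α x3),
    f.val = mkAA P x1 x2 h12 → g.val = mkAB P x3 →
    (str.comp f g).val = mkAB P (P.op x1 x2 x3 h12 h23)) ∧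
  (∀ (a b c : A ⊕ B) (f : EnvHom P a b) (g : EnvHom P b c)
    (x1 x2 : X) (h : P.β x2 = P.β x1),
    f.val = mkAB P x1 → g.val = mkBA P x2 →
    (str.comp f g).val = mkAA P x1 x2 h) ∧
  (∀ (a b c : A ⊕ B) (f : EnvHom P a b) (g : EnvHom P b c)
    (x1 x2 x3 : X) (h12 : P.β x2 = P.β x1) (h23 : P.α x2 = P.α x3),
    f.val = mkAB P x1 → g.val = mkBB P x2 x3 h23 →
    (str.comp f g).val = mkAB P (P.op x1 x2 x3 h12 h23)) ∧
  (∀ (a b c : A ⊕ B) (f : EnvHom P a b) (g : EnvHom P b c)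
    (x1 x2 x3 : X) (h12 : P.β x2 = P.β x1) (h23 : P.α x2 = P.α x3),
    f.val = mkBA P x3 → g.val = mkAA P x2 x1 h12.symm →
    (str.comp f g).val = mkBA P (P.op x1 x2 x3 h12 h23)) ∧
  (∀ (a b c : A ⊕ B) (f : EnvHom P a b) (g : EnvHom P b c)
    (x2 x3 : X) (h23 : P.α x2 = P.α x3),
    f.val = mkBA P x2 → g.val = mkAB P x3 →
    (str.comp f g).val = mkBB P x2 x3 h23) ∧
  (∀ (a b c : A ⊕ B) (f : EnvHom P a b) (g : EnvHom P b c)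
    (x1 x2 x3 : X) (h12 : P.β x2 = P.β x1) (h23 : P.α x2 = P.α x3),
    f.val = mkBB P x3 x2 h23.symm → g.val = mkBA P x1 →
    (str.comp f g).val = mkBA P (P.op x1 x2 x3 h12 h23)) ∧
  (∀ (a b c : A ⊕ B) (f : EnvHom P a b) (g : EnvHom P b c)
    (x2 x3 x4 x5 : X) (h23 : P.α x2 = P.α x3) (h43 : P.β x4 = P.β x3)
    (h45 : P.α x4 = P.α x5) (hq : P.α x2 = P.α (P.op x3 x4 x5 h43 h45)),
    f.val = mkBB P x2 x3 h23 → g.val = mkBB P x4 x5 h45 →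
    (str.comp f g).val = mkBB P x2 (P.op x3 x4 x5 h43 h45) hq) ∧
  (∀ (x : X) (a : A ⊕ B), a = Sum.inl (P.α x) →
    (str.ident a).val = mkAA P x x rfl) ∧
  (∀ (x : X) (b : A ⊕ B), b = Sum.inr (P.β x) →
    (str.ident b).val = mkBB P x x rfl)

open CategoryTheory in
/-- A functor from the enveloping groupoid `X⁺` (presented by a groupoid
structure `str` on its hom-sets) to a groupoid `C`. -/
structure EnvFunctor {A B X : Type*} (P : Pregroupoid A B X)
    (str : GroupoidStructure (EnvHom P)) (C : Type*) [Groupoid C] where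
  obj : A ⊕ B → C
  map : ∀ {a b : A ⊕ B}, EnvHom P a b → (obj a ⟶ obj b)
  map_ident : ∀ a, map (str.ident a) = 𝟙 (obj a)
  map_comp : ∀ {a b c : A ⊕ B} (f : EnvHom P a b) (g : EnvHom P b c),
    map (str.comp f g) = map f ≫ map g

open CategoryTheory

theorem Arr.induction {A B X : Type*} {P : Pregroupoid A B X} {motive : Arr P → Prop}
    (aa : ∀ y x h, motive (mkAA P y x h)) (bb : ∀ x z h, motive (mkBB P x z h))
    (ab : ∀ x, motive (mkAB P x)) (ba : ∀ x, motive (mkBA P x)) (u : Arr P) : motive u := by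
  rcases u with c | c | x | x
  · induction c using Quot.ind with | mk p => exact aa p.val.2 p.val.1 p.prop
  · induction c using Quot.ind with | mk p => exact bb p.val.1 p.val.2 p.prop
  · exact ab x
  · exact ba x

def PreservesOp {A B X : Type*} (P : Pregroupoid A B X) {C : Type*} [Groupoid C]
    (φ0 : A → C) (φ1 : B → C) (φ : ∀ x : X, φ0 (P.α x) ⟶ φ1 (P.β x)) : Prop :=
  ∀ (y x z : X) (h1 : P.β x = P.β y) (h2 : P.α x = P.α z),
    φ (P.op y x z h1 h2)
      = eqToHom (congrArg φ0 (P.α_op y x z h1 h2)) ≫ φ y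
        ≫ eqToHom (congrArg φ1 h1.symm) ≫ Groupoid.inv (φ x)
        ≫ eqToHom (congrArg φ0 h2) ≫ φ z
        ≫ eqToHom (congrArg φ1 (P.β_op y x z h1 h2).symm)

namespace PreservesOp

variable {A B X : Type*} {P : Pregroupoid A B X} {C : Type*} [Groupoid C]
  {φ0 : A → C} {φ1 : B → C} {φ : ∀ x : X, φ0 (P.α x) ⟶ φ1 (P.β x)}
  (hφ : PreservesOp P φ0 φ1 φ)
include hφ

theorem heq_of_hRel {p q : HPair P} (hpq : hRel P p q) :
    HEq (φ p.val.2 ≫ eqToHom (congrArg φ1 p.prop.symm) ≫ Groupoid.inv (φ p.val.1))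
      (φ q.val.2 ≫ eqToHom (congrArg φ1 q.prop.symm) ≫ Groupoid.inv (φ q.val.1)) := by
  obtain ⟨⟨x, y⟩, h⟩ := p
  obtain ⟨⟨z, _⟩, _⟩ := q
  obtain ⟨hxz, hq⟩ := hpq
  dsimp only at hxz hq ⊢
  subst hq
  refine (conj_eqToHom_iff_heq _ _ (congrArg φ0 (P.α_op y x z h hxz).symm)
    (congrArg φ0 hxz)).mp ?_
  simp [hφ y x z, Groupoid.inv_eq_inv]

theorem heq_of_vRel {p q : VPair P} (hpq : vRel P p q) :
    HEq (Groupoid.inv (φ p.val.1) ≫ eqToHom (congrArg φ0 p.prop) ≫ φ p.val.2)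
      (Groupoid.inv (φ q.val.1) ≫ eqToHom (congrArg φ0 q.prop) ≫ φ q.val.2) := by
  obtain ⟨⟨x, z⟩, h⟩ := p
  obtain ⟨⟨y, _⟩, _⟩ := q
  obtain ⟨hxy, hq⟩ := hpq
  dsimp only at hxy hq ⊢
  subst hq
  refine (conj_eqToHom_iff_heq _ _ (congrArg φ1 hxy)
    (congrArg φ1 (P.β_op y x z hxy h).symm)).mp ?_
  simp [hφ y x z, Groupoid.inv_eq_inv]

def lift : ∀ u : Arr P, Sum.elim φ0 φ1 (d0 P u) ⟶ Sum.elim φ0 φ1 (d1 P u)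
  | .ab x => φ x
  | .ba x => Groupoid.inv (φ x)
  | .aa c => Quot.hrecOn
      (motive := fun c => Sum.elim φ0 φ1 (d0 P (.aa c)) ⟶ Sum.elim φ0 φ1 (d1 P (.aa c))) c
      (fun p => (φ p.val.2 ≫ eqToHom (congrArg φ1 p.prop.symm) ≫ Groupoid.inv (φ p.val.1) :
        φ0 (P.α p.val.2) ⟶ φ0 (P.α p.val.1)))
      fun _ _ => hφ.heq_of_hRel
  | .bb c => Quot.hrecOn
      (motive := fun c => Sum.elim φ0 φ1 (d0 P (.bb c)) ⟶ Sum.elim φ0 φ1 (d1 P (.bb c))) c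
      (fun p => (Groupoid.inv (φ p.val.1) ≫ eqToHom (congrArg φ0 p.prop) ≫ φ p.val.2 :
        φ1 (P.β p.val.1) ⟶ φ1 (P.β p.val.2)))
      fun _ _ => hφ.heq_of_vRel

theorem lift_mkAB (x : X) : hφ.lift (mkAB P x) = φ x := rfl

theorem lift_mkBA (x : X) : hφ.lift (mkBA P x) = Groupoid.inv (φ x) := rfl

theorem lift_mkAA (y x : X) (h : P.β x = P.β y) :
    hφ.lift (mkAA P y x h) = (φ y ≫ eqToHom (congrArg φ1 h.symm) ≫ Groupoid.inv (φ x) :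
      φ0 (P.α y) ⟶ φ0 (P.α x)) := rfl

theorem lift_mkBB (x z : X) (h : P.α x = P.α z) :
    hφ.lift (mkBB P x z h) = (Groupoid.inv (φ x) ≫ eqToHom (congrArg φ0 h) ≫ φ z :
      φ1 (P.β x) ⟶ φ1 (P.β z)) := rfl

theorem lift_mkAA_self (x : X) : hφ.lift (mkAA P x x rfl) = 𝟙 (φ0 (P.α x)) := by
  change φ x ≫ eqToHom rfl ≫ Groupoid.inv (φ x) = _
  rw [eqToHom_refl, Category.id_comp, Groupoid.comp_inv]

theorem lift_mkBB_self (x : X) : hφ.lift (mkBB P x x rfl) = 𝟙 (φ1 (P.β x)) := by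
  change Groupoid.inv (φ x) ≫ eqToHom rfl ≫ φ x = _
  rw [eqToHom_refl, Category.id_comp, Groupoid.inv_comp]

/-- The endpoints of `u`, `v`, `w` agree only propositionally, so "`lift w` is the composite of
`lift u` and `lift v`" is stated up to `eqToHom`, for all transport proofs at once. -/
def MapsComp (u v w : Arr P) : Prop :=
  ∀ (e0 : Sum.elim φ0 φ1 (d0 P w) = Sum.elim φ0 φ1 (d0 P u))
    (e1 : Sum.elim φ0 φ1 (d1 P u) = Sum.elim φ0 φ1 (d0 P v))
    (e2 : Sum.elim φ0 φ1 (d1 P v) = Sum.elim φ0 φ1 (d1 P w)),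
    hφ.lift w = eqToHom e0 ≫ hφ.lift u ≫ eqToHom e1 ≫ hφ.lift v ≫ eqToHom e2

theorem mapsComp_mkAA_mkAA (x1 x2 x3 x4 : X) (h12 : P.β x2 = P.β x1) (h34 : P.β x4 = P.β x3)
    (h23 : P.α x2 = P.α x3) (hu : P.β x4 = P.β (P.op x1 x2 x3 h12 h23)) :
    hφ.MapsComp (mkAA P x1 x2 h12) (mkAA P x3 x4 h34)
      (mkAA P (P.op x1 x2 x3 h12 h23) x4 hu) := by
  intro e0 e1 e2
  simp only [lift_mkAA]
  -- `simp` reassociates only once the objects `Sum.elim φ0 φ1 (d0 P _)` are unfolded to `φ0 _`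
  dsimp only [mkAA, d0, d1, Sum.elim] at e0 e1 e2 ⊢
  simp [hφ x1 x2 x3, Groupoid.inv_eq_inv]

theorem mapsComp_mkAA_mkAB (x1 x2 x3 : X) (h12 : P.β x2 = P.β x1) (h23 : P.α x2 = P.α x3) :
    hφ.MapsComp (mkAA P x1 x2 h12) (mkAB P x3) (mkAB P (P.op x1 x2 x3 h12 h23)) := by
  intro e0 e1 e2
  simp only [lift_mkAA, lift_mkAB]
  dsimp only [mkAA, mkAB, d0, d1, Sum.elim] at e0 e1 e2 ⊢
  simp [hφ x1 x2 x3, Groupoid.inv_eq_inv]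

theorem mapsComp_mkAB_mkBA (x1 x2 : X) (h : P.β x2 = P.β x1) :
    hφ.MapsComp (mkAB P x1) (mkBA P x2) (mkAA P x1 x2 h) := by
  intro e0 e1 e2
  simp only [lift_mkAA, lift_mkAB, lift_mkBA]
  dsimp only [mkAA, mkAB, mkBA, d0, d1, Sum.elim] at e0 e1 e2 ⊢
  simp [Groupoid.inv_eq_inv]

theorem mapsComp_mkAB_mkBB (x1 x2 x3 : X) (h12 : P.β x2 = P.β x1) (h23 : P.α x2 = P.α x3) :
    hφ.MapsComp (mkAB P x1) (mkBB P x2 x3 h23) (mkAB P (P.op x1 x2 x3 h12 h23)) := by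
  intro e0 e1 e2
  simp only [lift_mkBB, lift_mkAB]
  dsimp only [mkBB, mkAB, d0, d1, Sum.elim] at e0 e1 e2 ⊢
  simp [hφ x1 x2 x3, Groupoid.inv_eq_inv]

theorem mapsComp_mkBA_mkAA (x1 x2 x3 : X) (h12 : P.β x2 = P.β x1) (h23 : P.α x2 = P.α x3) :
    hφ.MapsComp (mkBA P x3) (mkAA P x2 x1 h12.symm) (mkBA P (P.op x1 x2 x3 h12 h23)) := by
  intro e0 e1 e2
  simp only [lift_mkAA, lift_mkBA]
  dsimp only [mkAA, mkBA, d0, d1, Sum.elim] at e0 e1 e2 ⊢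
  simp [hφ x1 x2 x3, Groupoid.inv_eq_inv]

theorem mapsComp_mkBA_mkAB (x2 x3 : X) (h23 : P.α x2 = P.α x3) :
    hφ.MapsComp (mkBA P x2) (mkAB P x3) (mkBB P x2 x3 h23) := by
  intro e0 e1 e2
  simp only [lift_mkBB, lift_mkAB, lift_mkBA]
  dsimp only [mkBB, mkAB, mkBA, d0, d1, Sum.elim] at e0 e1 e2 ⊢
  simp [Groupoid.inv_eq_inv]

theorem mapsComp_mkBB_mkBA (x1 x2 x3 : X) (h12 : P.β x2 = P.β x1) (h23 : P.α x2 = P.α x3) :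
    hφ.MapsComp (mkBB P x3 x2 h23.symm) (mkBA P x1) (mkBA P (P.op x1 x2 x3 h12 h23)) := by
  intro e0 e1 e2
  simp only [lift_mkBB, lift_mkBA]
  dsimp only [mkBB, mkBA, d0, d1, Sum.elim] at e0 e1 e2 ⊢
  simp [hφ x1 x2 x3, Groupoid.inv_eq_inv]

theorem mapsComp_mkBB_mkBB (x2 x3 x4 x5 : X) (h23 : P.α x2 = P.α x3) (h43 : P.β x4 = P.β x3)
    (h45 : P.α x4 = P.α x5) (hq : P.α x2 = P.α (P.op x3 x4 x5 h43 h45)) :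
    hφ.MapsComp (mkBB P x2 x3 h23) (mkBB P x4 x5 h45)
      (mkBB P x2 (P.op x3 x4 x5 h43 h45) hq) := by
  intro e0 e1 e2
  simp only [lift_mkBB]
  dsimp only [mkBB, d0, d1, Sum.elim] at e0 e1 e2 ⊢
  simp [hφ x3 x4 x5, Groupoid.inv_eq_inv]

variable {str : GroupoidStructure (EnvHom P)}

theorem mapsComp_val_comp (hstr : TableSpec P str) {a b c : A ⊕ B} (f : EnvHom P a b)
    (g : EnvHom P b c) : hφ.MapsComp f.val g.val (str.comp f g).val := by
  obtain ⟨hAA, hAAB, hABA, hABB, hBAA, hBAB, hBBA, hBB, -, -⟩ := hstr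
  obtain ⟨u, hu, rfl⟩ := f
  obtain ⟨v, huv, hv⟩ := g
  induction u using Arr.induction with
  | aa x1 x2 h12 =>
    induction v using Arr.induction with
    | aa x3 x4 h34 =>
      have h23 : P.α x2 = P.α x3 := (Sum.inl.inj huv).symm
      rw [hAA _ _ _ ⟨_, hu, rfl⟩ ⟨_, huv, hv⟩ x1 x2 x3 x4 h12 h34 h23
        (h34.trans (P.β_op x1 x2 x3 h12 h23).symm) rfl rfl]
      exact hφ.mapsComp_mkAA_mkAA x1 x2 x3 x4 h12 h34 h23 _
    | ab x3 =>
      have h23 : P.α x2 = P.α x3 := (Sum.inl.inj huv).symm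
      rw [hAAB _ _ _ ⟨_, hu, rfl⟩ ⟨_, huv, hv⟩ x1 x2 x3 h12 h23 rfl rfl]
      exact hφ.mapsComp_mkAA_mkAB x1 x2 x3 h12 h23
    | bb _ _ _ | ba _ => exact nomatch huv
  | ab x1 =>
    induction v using Arr.induction with
    | ba x2 =>
      rw [hABA _ _ _ ⟨_, hu, rfl⟩ ⟨_, huv, hv⟩ x1 x2 (Sum.inr.inj huv) rfl rfl]
      exact hφ.mapsComp_mkAB_mkBA x1 x2 _
    | bb x2 x3 h23 =>
      rw [hABB _ _ _ ⟨_, hu, rfl⟩ ⟨_, huv, hv⟩ x1 x2 x3 (Sum.inr.inj huv) h23 rfl rfl]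
      exact hφ.mapsComp_mkAB_mkBB x1 x2 x3 _ h23
    | aa _ _ _ | ab _ => exact nomatch huv
  | ba x3 =>
    induction v using Arr.induction with
    | aa x2 x1 h21 =>
      have h23 : P.α x2 = P.α x3 := Sum.inl.inj huv
      rw [hBAA _ _ _ ⟨_, hu, rfl⟩ ⟨_, huv, hv⟩ x1 x2 x3 h21.symm h23 rfl rfl]
      exact hφ.mapsComp_mkBA_mkAA x1 x2 x3 h21.symm h23
    | ab x3' =>
      rw [hBAB _ _ _ ⟨_, hu, rfl⟩ ⟨_, huv, hv⟩ x3 x3' (Sum.inl.inj huv).symm rfl rfl]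
      exact hφ.mapsComp_mkBA_mkAB x3 x3' _
    | bb _ _ _ | ba _ => exact nomatch huv
  | bb x2 x3 h23 =>
    induction v using Arr.induction with
    | ba x1 =>
      have h12 : P.β x3 = P.β x1 := (Sum.inr.inj huv).symm
      rw [hBBA _ _ _ ⟨_, hu, rfl⟩ ⟨_, huv, hv⟩ x1 x3 x2 h12 h23.symm rfl rfl]
      exact hφ.mapsComp_mkBB_mkBA x1 x3 x2 h12 h23.symm
    | bb x4 x5 h45 =>
      have h43 : P.β x4 = P.β x3 := Sum.inr.inj huv
      rw [hBB _ _ _ ⟨_, hu, rfl⟩ ⟨_, huv, hv⟩ x2 x3 x4 x5 h23 h43 h45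
        (h23.trans (P.α_op x3 x4 x5 h43 h45).symm) rfl rfl]
      exact hφ.mapsComp_mkBB_mkBB x2 x3 x4 x5 h23 h43 h45 _
    | aa _ _ _ | ab _ => exact nomatch huv

def extendMap {a b : A ⊕ B} (f : EnvHom P a b) : Sum.elim φ0 φ1 a ⟶ Sum.elim φ0 φ1 b :=
  eqToHom (congrArg _ f.prop.1.symm) ≫ hφ.lift f.val ≫ eqToHom (congrArg _ f.prop.2)

theorem extendMap_heq_lift {a b : A ⊕ B} (f : EnvHom P a b) :
    HEq (hφ.extendMap f) (hφ.lift f.val) := by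
  obtain ⟨u, rfl, rfl⟩ := f
  simp [extendMap]

theorem extendMap_ident (hstr : TableSpec P str) (a : A ⊕ B) :
    hφ.extendMap (str.ident a) = 𝟙 _ := by
  obtain ⟨-, -, -, -, -, -, -, -, hidA, hidB⟩ := hstr
  refine eq_of_heq ((hφ.extendMap_heq_lift _).trans ?_)
  rcases a with a | b
  · obtain ⟨x, rfl⟩ := P.α_surj a
    rw [hidA x _ rfl]
    exact heq_of_eq (hφ.lift_mkAA_self x)
  · obtain ⟨x, rfl⟩ := P.β_surj b
    rw [hidB x _ rfl]
    exact heq_of_eq (hφ.lift_mkBB_self x)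

theorem extendMap_comp (hstr : TableSpec P str) {a b c : A ⊕ B} (f : EnvHom P a b)
    (g : EnvHom P b c) : hφ.extendMap (str.comp f g) = hφ.extendMap f ≫ hφ.extendMap g := by
  simp only [extendMap]
  rw [hφ.mapsComp_val_comp hstr f g
    (congrArg _ ((str.comp f g).prop.1.trans f.prop.1.symm))
    (congrArg _ (f.prop.2.trans g.prop.1.symm))
    (congrArg _ (g.prop.2.trans (str.comp f g).prop.2.symm))]
  simp

def extension (hstr : TableSpec P str) : EnvFunctor P str C where
  obj := Sum.elim φ0 φ1
  map := hφ.extendMap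
  map_ident := hφ.extendMap_ident hstr
  map_comp := hφ.extendMap_comp hstr

end PreservesOp

theorem EnvFunctor.ext_of_heq {A B X : Type*} {P : Pregroupoid A B X}
    {str : GroupoidStructure (EnvHom P)} {C : Type*} [Groupoid C] {F G : EnvFunctor P str C}
    (hobj : F.obj = G.obj)
    (hmap : ∀ u : Arr P, HEq (F.map (⟨u, rfl, rfl⟩ : EnvHom P (d0 P u) (d1 P u)))
      (G.map (⟨u, rfl, rfl⟩ : EnvHom P (d0 P u) (d1 P u)))) : F = G := by
  cases F; cases G
  dsimp only at hobj hmap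
  subst hobj
  congr
  funext a b f
  obtain ⟨u, rfl, rfl⟩ := f
  exact eq_of_heq (hmap u)

open CategoryTheory in
/-- Any pregroupoid homomorphism `φ = (φ₀, φ₁, φ)` from a
pregroupoid `X` on `A`, `B` to the underlying pregroupoid of a groupoid `C`
extends uniquely to a functor `φ̄ : X⁺ → C` from the enveloping groupoid with
`φ̄ ∘ η = φ` (i.e. `φ̄(x) = φ(x)` on `X = X⁺(A,B)`), and moreover
`φ̄(x⁻¹) = φ(x)⁻¹`, `φ̄(yx⁻¹) = φ(y) ∘ φ(x)⁻¹` and `φ̄(x⁻¹z) = φ(x)⁻¹ ∘ φ(z)`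
(composing from left to right). -/
theorem enveloping_groupoid_universal_property {A B X : Type*}
    (P : Pregroupoid A B X) (str : GroupoidStructure (EnvHom P))
    (hstr : TableSpec P str) (C : Type*) [Groupoid C]
    (φ0 : A → C) (φ1 : B → C) (φ : ∀ x : X, φ0 (P.α x) ⟶ φ1 (P.β x))
    (hφ : ∀ (y x z : X) (h1 : P.β x = P.β y) (h2 : P.α x = P.α z),
      φ (P.op y x z h1 h2)
        = eqToHom (congrArg φ0 (P.α_op y x z h1 h2)) ≫ φ y
          ≫ eqToHom (congrArg φ1 h1.symm) ≫ Groupoid.inv (φ x)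
          ≫ eqToHom (congrArg φ0 h2) ≫ φ z
          ≫ eqToHom (congrArg φ1 (P.β_op y x z h1 h2).symm)) :
    ∃! F : EnvFunctor P str C,
      (∀ a : A, F.obj (Sum.inl a) = φ0 a) ∧
      (∀ b : B, F.obj (Sum.inr b) = φ1 b) ∧
      (∀ x : X,
        HEq (F.map (⟨mkAB P x, rfl, rfl⟩ :
          EnvHom P (Sum.inl (P.α x)) (Sum.inr (P.β x)))) (φ x)) ∧
      (∀ x : X,
        HEq (F.map (⟨mkBA P x, rfl, rfl⟩ :
          EnvHom P (Sum.inr (P.β x)) (Sum.inl (P.α x))))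
          (Groupoid.inv (φ x))) ∧
      (∀ (y x : X) (h : P.β x = P.β y),
        HEq (F.map (⟨mkAA P y x h, rfl, rfl⟩ :
          EnvHom P (Sum.inl (P.α y)) (Sum.inl (P.α x))))
          (φ y ≫ eqToHom (congrArg φ1 h.symm) ≫ Groupoid.inv (φ x))) ∧
      (∀ (x z : X) (h : P.α x = P.α z),
        HEq (F.map (⟨mkBB P x z h, rfl, rfl⟩ :
          EnvHom P (Sum.inr (P.β x)) (Sum.inr (P.β z))))
          (Groupoid.inv (φ x) ≫ eqToHom (congrArg φ0 h) ≫ φ z)) := by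
  have hom : PreservesOp P φ0 φ1 φ := hφ
  refine ⟨hom.extension hstr, ⟨fun _ => rfl, fun _ => rfl, fun _ => hom.extendMap_heq_lift _,
    fun _ => hom.extendMap_heq_lift _, fun _ _ _ => hom.extendMap_heq_lift _,
    fun _ _ _ => hom.extendMap_heq_lift _⟩, ?_⟩
  rintro F ⟨hA, hB, hAB, hBA, hAA, hBB⟩
  refine EnvFunctor.ext_of_heq (funext (Sum.rec hA hB)) fun u => ?_
  refine HEq.trans ?_ (hom.extendMap_heq_lift _).symm
  induction u using Arr.induction with
  | aa y x h => exact hAA y x h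
  | bb x z h => exact hBB x z h
  | ab x => exact hAB x
  | ba x => exact hBA x

end Kock
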